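/- Let T be a finite tree with root ρ and edge flip probabilities ε_e ∈ [0,1]. Consider on one hand the broadcasting-on-trees variables: σ_ρ uniform on {−1,+1}, (η_e) independent with P(η_e=−1)=ε_e, and σ_v := σ_ρ·Π_{e ∈ path(ρ,v)} η_e. Consider on the other hand the spin synchronization variables: (X_v)_{v∈V(T)} i.i.d. uniform on {−1,+1}, (Z_e) independent with P(Z_e=−1)=ε_e, and Y_e := X_i·X_j·Z_e for e = {i,j}. Then for every set of vertices W ⊆ V(T): I2(σ_ρ; (σ_w)_{w∈W}) = I2(X_ρ; ((X_w)_{w∈W}, (Y_e)_{e∈E(T)})); equivalently, E[(E[σ_ρ | σ_W])²] = E[(E[X_ρ | X_W, Y])²]. -/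

import Mathlib

open Finset
open scoped Classical

noncomputable section

/-- Probability of an event under the probability mass function `p` on `Ω`. -/
def pr {Ω : Type*} [Fintype Ω] (p : Ω → ℝ) (E : Ω → Prop) : ℝ :=
  ∑ ω ∈ Finset.univ.filter (fun ω => E ω), p ω

/-- Expectation of `f` under `p`. -/
def expec {Ω : Type*} [Fintype Ω] (p : Ω → ℝ) (f : Ω → ℝ) : ℝ :=
  ∑ ω, p ω * f ω

/-- The conditional expectation `E[U | A]`, as a random variable on `Ω`. -/
def condExp {Ω α : Type*} [Fintype Ω] (p : Ω → ℝ) (A : Ω → α) (U : Ω → ℝ) : Ω → ℝ :=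
  fun ω => expec p (fun ω' => if A ω' = A ω then U ω' else 0) / pr p (fun ω' => A ω' = A ω)

/-- The variance of `f` under `p`. -/
def var {Ω : Type*} [Fintype Ω] (p : Ω → ℝ) (f : Ω → ℝ) : ℝ :=
  expec p (fun ω => (f ω - expec p f)^2)

/-- The chi-squared mutual information `I2(A;B)`. -/
def I2 {Ω α β : Type*} [Fintype Ω] (p : Ω → ℝ) (A : Ω → α) (B : Ω → β) : ℝ :=
  ∑ a ∈ Finset.univ.image A, ∑ b ∈ Finset.univ.image B,
    if 0 < pr p (fun ω => A ω = a) * pr p (fun ω => B ω = b) then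
      (pr p (fun ω => A ω = a ∧ B ω = b) - pr p (fun ω => A ω = a) * pr p (fun ω => B ω = b))^2
        / (pr p (fun ω => A ω = a) * pr p (fun ω => B ω = b))
    else 0

/-- The product of the two spins adjacent to an (unordered) edge. -/
def edgeSpin {V : Type*} (x : V → ℝ) : Sym2 V → ℝ :=
  Sym2.lift ⟨fun i j => x i * x j, fun i j => mul_comm (x i) (x j)⟩

section Aux

variable {Ω : Type*} [Fintype Ω]

lemma pr_congr (p : Ω → ℝ) {E F : Ω → Prop} (h : ∀ ω, E ω ↔ F ω) : pr p E = pr p F := by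
  unfold pr
  congr 1
  exact Finset.filter_congr (fun ω _ => by simpa using h ω)

lemma pr_eq_zero_of_not_mem_image {α : Type*} (p : Ω → ℝ) (A : Ω → α) {a : α}
    (ha : a ∉ Finset.univ.image A) : pr p (fun ω => A ω = a) = 0 := by
  unfold pr
  rw [Finset.filter_false_of_mem, Finset.sum_empty]
  intro ω _
  exact fun h => ha (Finset.mem_image.2 ⟨ω, Finset.mem_univ ω, h⟩)

lemma pr_partition {κ : Type*} (p : Ω → ℝ) (K : Ω → κ) (S : Finset κ)
    (hS : ∀ ω, K ω ∈ S) (E : Ω → Prop) (Ψ : κ → Prop) (hE : ∀ ω, E ω ↔ Ψ (K ω)) :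
    pr p E = ∑ k ∈ S, if Ψ k then pr p (fun ω => K ω = k) else 0 := by
  classical
  unfold pr
  rw [← Finset.sum_fiberwise_of_maps_to (g := K) (fun ω _ => hS ω) p]
  refine Finset.sum_congr rfl fun k _ => ?_
  by_cases hk : Ψ k
  · rw [if_pos hk]
    congr 1
    ext ω
    simp only [Finset.mem_filter, Finset.mem_univ, true_and]
    constructor
    · rintro ⟨_, h2⟩; exact h2
    · intro h; exact ⟨(hE ω).2 (h ▸ hk), h⟩
  · rw [if_neg hk]
    rw [Finset.sum_eq_zero]
    intro ω hω
    simp only [Finset.mem_filter, Finset.mem_univ, true_and] at hω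
    exact absurd (hω.2 ▸ (hE ω).1 hω.1) hk

lemma expec_indicator_split (p : Ω → ℝ) (U : Ω → ℝ) (hU : ∀ ω, U ω = 1 ∨ U ω = -1)
    (Q : Ω → Prop) :
    expec p (fun ω => if Q ω then U ω else 0)
      = pr p (fun ω => U ω = 1 ∧ Q ω) - pr p (fun ω => U ω = -1 ∧ Q ω) := by
  classical
  unfold expec pr
  rw [Finset.sum_filter, Finset.sum_filter, ← Finset.sum_sub_distrib]
  refine Finset.sum_congr rfl fun ω _ => ?_
  rcases hU ω with h | h <;> by_cases hq : Q ω <;> simp [h, hq] <;> norm_num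

lemma I2_eq_sum {α β : Type*} (p : Ω → ℝ) (A : Ω → α) (B : Ω → β)
    (s : Finset α) (t : Finset β) (hA : ∀ ω, A ω ∈ s) (hB : ∀ ω, B ω ∈ t) :
    I2 p A B = ∑ a ∈ s, ∑ b ∈ t,
      if 0 < pr p (fun ω => A ω = a) * pr p (fun ω => B ω = b) then
        (pr p (fun ω => A ω = a ∧ B ω = b) - pr p (fun ω => A ω = a) * pr p (fun ω => B ω = b))^2
          / (pr p (fun ω => A ω = a) * pr p (fun ω => B ω = b))
      else 0 := by
  classical
  unfold I2
  have hAs : Finset.univ.image A ⊆ s := by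
    intro a ha
    obtain ⟨ω, _, rfl⟩ := Finset.mem_image.1 ha
    exact hA ω
  have hBt : Finset.univ.image B ⊆ t := by
    intro b hb
    obtain ⟨ω, _, rfl⟩ := Finset.mem_image.1 hb
    exact hB ω
  rw [Finset.sum_subset hAs ?_]
  · refine Finset.sum_congr rfl fun a _ => ?_
    rw [Finset.sum_subset hBt ?_]
    intro b _ hb
    rw [pr_eq_zero_of_not_mem_image p B hb, mul_zero, if_neg (lt_irrefl 0)]
  · intro a _ ha
    rw [Finset.sum_eq_zero]
    intro b _
    rw [pr_eq_zero_of_not_mem_image p A ha, zero_mul, if_neg (lt_irrefl 0)]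

lemma expec_condExp_sq {β : Type*} (p : Ω → ℝ) (B : Ω → β) (U : Ω → ℝ)
    (t : Finset β) (hB : ∀ ω, B ω ∈ t) :
    expec p (fun ω => (condExp p B U ω)^2)
      = ∑ b ∈ t, (expec p (fun ω => if B ω = b then U ω else 0))^2
          / pr p (fun ω => B ω = b) := by
  classical
  set g : β → ℝ := fun b =>
    expec p (fun ω' => if B ω' = b then U ω' else 0) / pr p (fun ω' => B ω' = b) with hg
  have h1 : expec p (fun ω => (condExp p B U ω)^2) = ∑ ω, p ω * (g (B ω))^2 := rfl
  have h2 : ∀ b, (∑ ω ∈ Finset.univ.filter (fun ω => B ω = b), p ω * (g (B ω))^2)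
      = pr p (fun ω => B ω = b) * (g b)^2 := by
    intro b
    rw [pr, Finset.sum_mul]
    refine Finset.sum_congr ?_ fun ω hω => ?_
    · ext ω; simp
    · rw [(Finset.mem_filter.1 hω).2]
  have h3 : ∀ b, pr p (fun ω => B ω = b) * (g b)^2
      = (expec p (fun ω => if B ω = b then U ω else 0))^2 / pr p (fun ω => B ω = b) := by
    intro b
    rw [hg]
    rcases eq_or_ne (pr p (fun ω => B ω = b)) 0 with h | h
    · simp [h]
    · field_simp
  rw [h1, ← Finset.sum_fiberwise_of_maps_to (g := B) (fun ω _ => hB ω)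
      (fun ω => p ω * (g (B ω))^2)]
  exact Finset.sum_congr rfl fun b _ => (h2 b).trans (h3 b)

end Aux

section Cube

/-- The set of ±1-valued functions on `ι`, as a `Finset`. -/
def pmCube (ι : Type*) [Fintype ι] : Finset (ι → ℝ) :=
  Finset.image (fun b : ι → Bool => fun i => if b i then 1 else -1) Finset.univ

lemma mem_pmCube {ι : Type*} [Fintype ι] {x : ι → ℝ} :
    x ∈ pmCube ι ↔ ∀ i, x i = 1 ∨ x i = -1 := by
  constructor
  · rintro hx i
    obtain ⟨b, _, rfl⟩ := Finset.mem_image.1 hx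
    by_cases h : b i <;> simp [h]
  · intro h
    refine Finset.mem_image.2 ⟨fun i => x i = 1, Finset.mem_univ _, ?_⟩
    funext i
    rcases h i with h1 | h1 <;> norm_num [h1]

lemma card_pmCube {ι : Type*} [Fintype ι] :
    (pmCube ι).card = 2 ^ Fintype.card ι := by
  rw [pmCube, Finset.card_image_of_injective _ ?_, Finset.card_univ, Fintype.card_fun,
    Fintype.card_bool]
  intro b b' h
  funext i
  have := congrFun h i
  by_cases hb : b i <;> by_cases hb' : b' i <;> simp [hb, hb'] at this ⊢ <;> norm_num at this

lemma pm_mul {a b : ℝ} (ha : a = 1 ∨ a = -1) (hb : b = 1 ∨ b = -1) :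
    a * b = 1 ∨ a * b = -1 := by
  rcases ha with h | h <;> rcases hb with h' | h' <;> simp [h, h']

lemma pm_sq {a : ℝ} (ha : a = 1 ∨ a = -1) : a * a = 1 := by
  rcases ha with h | h <;> norm_num [h]

lemma pm_prod {ι : Type*} (s : Finset ι) (f : ι → ℝ) (h : ∀ i ∈ s, f i = 1 ∨ f i = -1) :
    (∏ i ∈ s, f i) = 1 ∨ (∏ i ∈ s, f i) = -1 :=
  Finset.prod_induction f (fun r => r = 1 ∨ r = -1) (fun _ _ => pm_mul) (Or.inl rfl) h

lemma edgeSpin_mk {V : Type*} (x : V → ℝ) (i j : V) : edgeSpin x s(i, j) = x i * x j := rfl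

lemma edgeSpin_pm {V : Type*} {x : V → ℝ} (hx : ∀ v, x v = 1 ∨ x v = -1) (e : Sym2 V) :
    edgeSpin x e = 1 ∨ edgeSpin x e = -1 := by
  induction e using Sym2.ind with
  | _ i j => exact pm_mul (hx i) (hx j)

end Cube

section Tree

variable {V : Type*} [Fintype V] [DecidableEq V] {G : SimpleGraph V}

lemma walk_prod_edgeSpin {x : V → ℝ} (hx : ∀ v, x v = 1 ∨ x v = -1) :
    ∀ {u v : V} (w : G.Walk u v), ((w.edges).map (edgeSpin x)).prod = x u * x v := by
  intro u v w
  induction w with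
  | nil => exact (pm_sq (hx _)).symm
  | @cons a b c h p ih =>
    rw [SimpleGraph.Walk.edges_cons, List.map_cons, List.prod_cons, ih]
    rw [edgeSpin_mk]
    have : x b * x b = 1 := pm_sq (hx b)
    calc x a * x b * (x b * x c) = x a * (x b * x b) * x c := by ring
    _ = x a * x c := by rw [this]; ring

lemma pathE_telescope {ρ : V} {pathE : V → Finset (Sym2 V)}
    (hpath : ∀ v : V, ∃ w : G.Walk ρ v, w.IsPath ∧ pathE v = w.edges.toFinset)
    {x : V → ℝ} (hx : ∀ v, x v = 1 ∨ x v = -1) (v : V) :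
    (∏ e ∈ pathE v, edgeSpin x e) = x ρ * x v := by
  obtain ⟨w, hw, he⟩ := hpath v
  rw [he, List.prod_toFinset _ hw.edges_nodup, walk_prod_edgeSpin hx]

lemma pathE_root {ρ : V} {pathE : V → Finset (Sym2 V)} (hT : G.IsTree)
    (hpath : ∀ v : V, ∃ w : G.Walk ρ v, w.IsPath ∧ pathE v = w.edges.toFinset) :
    pathE ρ = ∅ := by
  obtain ⟨w, hw, he⟩ := hpath ρ
  rw [(SimpleGraph.Walk.isPath_iff_eq_nil (p := w)).1 hw] at he
  simpa using he

lemma pathE_subset [Fintype G.edgeSet] {ρ : V} {pathE : V → Finset (Sym2 V)}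
    (hpath : ∀ v : V, ∃ w : G.Walk ρ v, w.IsPath ∧ pathE v = w.edges.toFinset) (v : V) :
    pathE v ⊆ G.edgeFinset := by
  obtain ⟨w, hw, he⟩ := hpath v
  rw [he]
  intro e hee
  rw [List.mem_toFinset] at hee
  exact SimpleGraph.mem_edgeFinset.2 (w.edges_subset_edgeSet hee)

lemma adj_pathE {ρ : V} {pathE : V → Finset (Sym2 V)} (hT : G.IsTree)
    (hpath : ∀ v : V, ∃ w : G.Walk ρ v, w.IsPath ∧ pathE v = w.edges.toFinset)
    {i j : V} (h : G.Adj i j) :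
    (s(i,j) ∉ pathE i ∧ pathE j = insert s(i,j) (pathE i)) ∨
    (s(i,j) ∉ pathE j ∧ pathE i = insert s(i,j) (pathE j)) := by
  obtain ⟨p, hp, hpe⟩ := hpath i
  obtain ⟨q, hq, hqe⟩ := hpath j
  by_cases hj : j ∈ p.support
  · right
    have htU := hT.existsUnique_path ρ j
    have hqt : q = p.takeUntil j hj := htU.unique hq (hp.takeUntil hj)
    have hd : p.dropUntil j hj = SimpleGraph.Walk.cons h.symm SimpleGraph.Walk.nil := by
      have h1 : (p.dropUntil j hj).IsPath := hp.dropUntil hj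
      have h2 : (SimpleGraph.Walk.cons h.symm SimpleGraph.Walk.nil : G.Walk j i).IsPath := by
        simp [SimpleGraph.Walk.isPath_def, h.ne']
      exact (hT.existsUnique_path j i).unique h1 h2
    have hspec := SimpleGraph.Walk.take_spec p hj
    have hedges : p.edges = q.edges ++ [s(j,i)] := by
      conv_lhs => rw [← hspec]
      rw [SimpleGraph.Walk.edges_append, hd, hqt]
      simp
    have hnodup := hp.edges_nodup
    rw [hedges] at hnodup
    have hnotmem : s(j,i) ∉ q.edges := by
      intro hmem
      have := List.disjoint_of_nodup_append hnodup
      exact this hmem (by simp)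
    constructor
    · rw [hqe, Sym2.eq_swap]
      simpa using hnotmem
    · rw [hpe, hqe, hedges]
      ext e
      simp only [List.toFinset_append, Finset.mem_union, List.mem_toFinset, List.toFinset_cons,
        List.toFinset_nil, Finset.mem_insert, Finset.mem_singleton, Sym2.eq_swap (a := j) (b := i)]
      tauto
  · left
    have hcons : (p.append (SimpleGraph.Walk.cons h SimpleGraph.Walk.nil)).IsPath := by
      rw [SimpleGraph.Walk.isPath_def, SimpleGraph.Walk.support_append]
      have : (SimpleGraph.Walk.cons h SimpleGraph.Walk.nil : G.Walk i j).support.tail = [j] := by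
        simp
      rw [this, List.nodup_append]
      refine ⟨hp.support_nodup, by simp, ?_⟩
      intro a ha b hb hab
      rw [List.mem_singleton] at hb
      rw [hab, hb] at ha
      exact hj ha
    have hqp : q = p.append (SimpleGraph.Walk.cons h SimpleGraph.Walk.nil) :=
      (hT.existsUnique_path ρ j).unique hq hcons
    have hedges : q.edges = p.edges ++ [s(i,j)] := by
      rw [hqp, SimpleGraph.Walk.edges_append]
      simp
    have hnotmem : s(i,j) ∉ p.edges := by
      intro hmem
      exact hj (SimpleGraph.Walk.snd_mem_support_of_mem_edges p hmem)
    constructor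
    · rw [hpe]; simpa using hnotmem
    · rw [hpe, hqe, hedges]
      ext e
      simp only [List.toFinset_append, Finset.mem_union, List.mem_toFinset, List.toFinset_cons,
        List.toFinset_nil, Finset.mem_insert, Finset.mem_singleton]
      tauto

end Tree

section Tree2
variable {V : Type*} [Fintype V] [DecidableEq V] {G : SimpleGraph V}

lemma pm_prod' {ι : Type*} {s : Finset ι} {f : ι → ℝ} (h : ∀ i, f i = 1 ∨ f i = -1) :
    (∏ i ∈ s, f i) = 1 ∨ (∏ i ∈ s, f i) = -1 :=
  pm_prod s f (fun i _ => h i)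

lemma grad_edgeSpin [Fintype G.edgeSet] {ρ : V} {pathE : V → Finset (Sym2 V)} (hT : G.IsTree)
    (hpath : ∀ v : V, ∃ w : G.Walk ρ v, w.IsPath ∧ pathE v = w.edges.toFinset)
    {a : ℝ} (ha : a = 1 ∨ a = -1) {g : Sym2 V → ℝ} (hg : ∀ e, g e = 1 ∨ g e = -1)
    {e₀ : Sym2 V} (he : e₀ ∈ G.edgeFinset) :
    edgeSpin (fun v => a * ∏ e ∈ pathE v, g e) e₀ = g e₀ := by
  set x : V → ℝ := fun v => a * ∏ e ∈ pathE v, g e with hxdef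
  have hxpm : ∀ v, x v = 1 ∨ x v = -1 := fun v => pm_mul ha (pm_prod' hg)
  induction e₀ using Sym2.ind with
  | _ i j =>
    have hadj : G.Adj i j := by
      rw [SimpleGraph.mem_edgeFinset] at he
      exact he
    rw [edgeSpin_mk]
    rcases adj_pathE hT hpath hadj with ⟨hnm, hins⟩ | ⟨hnm, hins⟩
    · have hxj : x j = g s(i,j) * x i := by
        rw [hxdef]
        simp only
        rw [hins, Finset.prod_insert hnm]
        ring
      rw [hxj]
      have := pm_sq (hxpm i)
      calc x i * (g s(i,j) * x i) = (x i * x i) * g s(i,j) := by ring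
      _ = g s(i,j) := by rw [this]; ring
    · have hxi : x i = g s(i,j) * x j := by
        rw [hxdef]
        simp only
        rw [hins, Finset.prod_insert hnm]
        ring
      rw [hxi]
      have := pm_sq (hxpm j)
      calc g s(i,j) * x j * x j = (x j * x j) * g s(i,j) := by ring
      _ = g s(i,j) := by rw [this]; ring

end Tree2

section ExtF
variable {V : Type*} [DecidableEq V]

/-- Extend a function on a subtype of edges to all of `Sym2 V` by `1`. -/
def extF (E : Finset (Sym2 V)) (z : {e // e ∈ E} → ℝ) : Sym2 V → ℝ :=
  fun e => if h : e ∈ E then z ⟨e, h⟩ else 1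

lemma extF_mem {E : Finset (Sym2 V)} (z : {e // e ∈ E} → ℝ) {e : Sym2 V} (he : e ∈ E) :
    extF E z e = z ⟨e, he⟩ := dif_pos he

lemma extF_pm {E : Finset (Sym2 V)} {z : {e // e ∈ E} → ℝ}
    (hz : ∀ e, z e = 1 ∨ z e = -1) (e : Sym2 V) :
    extF E z e = 1 ∨ extF E z e = -1 := by
  unfold extF
  by_cases h : e ∈ E
  · rw [dif_pos h]; exact hz _
  · rw [dif_neg h]; left; rfl

end ExtF

section Alg

lemma ite_congr' {α : Sort*} {b c : Prop} {i1 : Decidable b} {i2 : Decidable c}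
    {x y u v : α} (h1 : b ↔ c) (h2 : x = u) (h3 : y = v) :
    @ite _ b i1 x y = @ite _ c i2 u v := by
  subst h2; subst h3
  by_cases hb : b
  · rw [if_pos hb, if_pos (h1.1 hb)]
  · rw [if_neg hb, if_neg (fun hc => hb (h1.2 hc))]


lemma scale_guard (Kc M J Q : ℝ) (hK : 0 < Kc) :
    (if 0 < M * (Kc * Q) then (Kc * J - M * (Kc * Q))^2 / (M * (Kc * Q)) else 0)
      = Kc * (if 0 < M * Q then (J - M * Q)^2 / (M * Q) else 0) := by
  by_cases h : 0 < M * Q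
  · rw [if_pos (by nlinarith), if_pos h]
    have h1 : Kc * J - M * (Kc * Q) = Kc * (J - M * Q) := by ring
    have h2 : M * (Kc * Q) = Kc * (M * Q) := by ring
    rw [h1, h2, mul_pow, pow_two, mul_assoc, mul_div_mul_left _ _ (ne_of_gt hK),
      mul_div_assoc]
  · rw [if_neg ?_, if_neg h, mul_zero]
    intro hc
    exact h (by nlinarith)

lemma scale_div (Kc x q : ℝ) (hK : 0 < Kc) :
    (Kc * x)^2 / (Kc * q) = Kc * (x^2 / q) := by
  rcases eq_or_ne q 0 with h | h
  · simp [h]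
  · rw [mul_pow, pow_two Kc, mul_assoc, mul_div_mul_left _ _ (ne_of_gt hK), mul_div_assoc]

end Alg

section Aux2
variable {Ω : Type*} [Fintype Ω]

lemma pr_split {κ : Type*} (p : Ω → ℝ) (K : Ω → κ) (S : Finset κ)
    (hS : ∀ ω, K ω ∈ S) (E : Ω → Prop) :
    pr p E = ∑ k ∈ S, pr p (fun ω => K ω = k ∧ E ω) := by
  classical
  unfold pr
  rw [← Finset.sum_fiberwise_of_maps_to (g := K) (fun ω _ => hS ω) p]
  refine Finset.sum_congr rfl fun k _ => ?_
  congr 1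
  ext ω
  simp only [Finset.mem_filter, Finset.mem_univ, true_and]
  exact ⟨fun ⟨h1, h2⟩ => ⟨h2, h1⟩, fun ⟨h1, h2⟩ => ⟨h2, h1⟩⟩

lemma expec_condExp_sq_pm {β : Type*} (p : Ω → ℝ) (B : Ω → β) (U : Ω → ℝ)
    (hU : ∀ ω, U ω = 1 ∨ U ω = -1) (t : Finset β) (hB : ∀ ω, B ω ∈ t) :
    expec p (fun ω => (condExp p B U ω)^2)
      = ∑ b ∈ t, (pr p (fun ω => U ω = 1 ∧ B ω = b) - pr p (fun ω => U ω = -1 ∧ B ω = b))^2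
          / pr p (fun ω => B ω = b) := by
  rw [expec_condExp_sq p B U t hB]
  refine Finset.sum_congr rfl fun b _ => ?_
  rw [expec_indicator_split p U hU (fun ω => B ω = b)]

end Aux2

/-- The product of the (extended) edge signs along the path from the root to `v`. -/
def PyF {V : Type*} [DecidableEq V] (E : Finset (Sym2 V)) (pathE : V → Finset (Sym2 V))
    (y : {e // e ∈ E} → ℝ) (v : V) : ℝ :=
  ∏ e ∈ pathE v, extF E y e
set_option maxHeartbeats 3200000

/-- equivalence of broadcasting on trees and spin synchronization on
trees. On a finite tree `G` with root `ρ` and flip probabilities `ε e`, the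
broadcasting-on-trees variables `(σ_v)` and the spin synchronization variables
`(X_v, Y_e = X_i X_j Z_e)` satisfy, for every set `W` of vertices,
`I2(σ_ρ; σ_W) = I2(X_ρ; (X_W, Y))`, and equivalently
`E[(E[σ_ρ | σ_W])²] = E[(E[X_ρ | X_W, Y])²]`. -/
theorem stmt18 {Ω₁ Ω₂ V : Type*} [Fintype Ω₁] [Fintype Ω₂] [Fintype V] [DecidableEq V]
    (G : SimpleGraph V) [DecidableRel G.Adj] (hT : G.IsTree) (ρ : V)
    (pathE : V → Finset (Sym2 V))
    (hpath : ∀ v : V, ∃ w : G.Walk ρ v, w.IsPath ∧ pathE v = w.edges.toFinset)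
    (ε : Sym2 V → ℝ)
    (hε0 : ∀ e ∈ G.edgeFinset, 0 ≤ ε e) (hε1 : ∀ e ∈ G.edgeFinset, ε e ≤ 1)
    -- the broadcasting-on-trees model
    (p₁ : Ω₁ → ℝ) (hp₁ : ∀ ω, 0 ≤ p₁ ω) (hps₁ : ∑ ω, p₁ ω = 1)
    (σρ : Ω₁ → ℝ) (η : Sym2 V → Ω₁ → ℝ)
    (hσr : ∀ ω, σρ ω = 1 ∨ σρ ω = -1)
    (hηr : ∀ e ∈ G.edgeFinset, ∀ ω, η e ω = 1 ∨ η e ω = -1)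
    (hjoint₁ : ∀ s : ℝ, (s = 1 ∨ s = -1) →
      ∀ z : Sym2 V → ℝ, (∀ e ∈ G.edgeFinset, z e = 1 ∨ z e = -1) →
      pr p₁ (fun ω => σρ ω = s ∧ ∀ e ∈ G.edgeFinset, η e ω = z e)
        = 1/2 * ∏ e ∈ G.edgeFinset, (if z e = -1 then ε e else 1 - ε e))
    (σ : V → Ω₁ → ℝ)
    (hσdef : ∀ v ω, σ v ω = σρ ω * ∏ e ∈ pathE v, η e ω)
    -- the spin synchronization model
    (p₂ : Ω₂ → ℝ) (hp₂ : ∀ ω, 0 ≤ p₂ ω) (hps₂ : ∑ ω, p₂ ω = 1)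
    (X : V → Ω₂ → ℝ) (Z : Sym2 V → Ω₂ → ℝ)
    (hXr : ∀ v ω, X v ω = 1 ∨ X v ω = -1)
    (hZr : ∀ e ∈ G.edgeFinset, ∀ ω, Z e ω = 1 ∨ Z e ω = -1)
    (hjoint₂ : ∀ x : V → ℝ, (∀ v, x v = 1 ∨ x v = -1) →
      ∀ z : Sym2 V → ℝ, (∀ e ∈ G.edgeFinset, z e = 1 ∨ z e = -1) →
      pr p₂ (fun ω => (∀ v, X v ω = x v) ∧ ∀ e ∈ G.edgeFinset, Z e ω = z e)
        = (1/2)^(Fintype.card V) *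
          ∏ e ∈ G.edgeFinset, (if z e = -1 then ε e else 1 - ε e))
    (Y : Sym2 V → Ω₂ → ℝ)
    (hYdef : ∀ e ∈ G.edgeFinset, ∀ ω, Y e ω = edgeSpin (fun v => X v ω) e * Z e ω)
    (W : Finset V) :
    I2 p₁ σρ (fun ω => fun w : {x // x ∈ W} => σ w.1 ω)
      = I2 p₂ (X ρ) (fun ω => ((fun w : {x // x ∈ W} => X w.1 ω),
          (fun e : {e // e ∈ G.edgeFinset} => Y e.1 ω))) ∧
    expec p₁ (fun ω => (condExp p₁ (fun ω' => fun w : {x // x ∈ W} => σ w.1 ω') σρ ω)^2)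
      = expec p₂ (fun ω => (condExp p₂ (fun ω' => ((fun w : {x // x ∈ W} => X w.1 ω'),
          (fun e : {e // e ∈ G.edgeFinset} => Y e.1 ω'))) (X ρ) ω)^2) := by
  classical
  have hKpos : (0:ℝ) < (1/2)^(G.edgeFinset.card) := by positivity
  have hσpm : ∀ v ω, σ v ω = 1 ∨ σ v ω = -1 := by
    intro v ω
    rw [hσdef]
    exact pm_mul (hσr ω) (pm_prod _ _ (fun e he => hηr e (pathE_subset hpath v he) ω))
  have hYpm : ∀ e ∈ G.edgeFinset, ∀ ω, Y e ω = 1 ∨ Y e ω = -1 := by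
    intro e he ω
    rw [hYdef e he ω]
    exact pm_mul (edgeSpin_pm (fun v => hXr v ω) e) (hZr e he ω)
  have hB1mem : ∀ ω, (fun w : {x // x ∈ W} => σ w.1 ω) ∈ pmCube {x // x ∈ W} :=
    fun ω => mem_pmCube.2 fun w => hσpm w.1 ω
  have hB2mem : ∀ ω, ((fun w : {x // x ∈ W} => X w.1 ω),
      (fun e : {e // e ∈ G.edgeFinset} => Y e.1 ω))
      ∈ (pmCube {x // x ∈ W}) ×ˢ (pmCube {e // e ∈ G.edgeFinset}) := by
    intro ω
    rw [Finset.mem_product]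
    exact ⟨mem_pmCube.2 fun w => hXr w.1 ω, mem_pmCube.2 fun e => hYpm e.1 e.2 ω⟩
  have hApm1 : ∀ ω, σρ ω ∈ ({1, -1} : Finset ℝ) := fun ω => by
    rcases hσr ω with h | h <;> simp [h]
  have hApm2 : ∀ ω, X ρ ω ∈ ({1, -1} : Finset ℝ) := fun ω => by
    rcases hXr ρ ω with h | h <;> simp [h]
  have hNK : (((pmCube {e // e ∈ G.edgeFinset}).card : ℝ)) * ((1/2:ℝ)^(G.edgeFinset.card)) = 1 := by
    rw [card_pmCube, Fintype.card_coe]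
    push_cast
    rw [← mul_pow]
    norm_num
  -- the key probability computation
  have Hmain : ∀ a ∈ ({1,-1} : Finset ℝ), ∀ c ∈ pmCube {x // x ∈ W},
      ∀ y ∈ pmCube {e // e ∈ G.edgeFinset},
      pr p₂ (fun ω => X ρ ω = a ∧ ((fun w : {x // x ∈ W} => X w.1 ω),
          (fun e : {e // e ∈ G.edgeFinset} => Y e.1 ω)) = (c, y))
        = (1/2)^(G.edgeFinset.card) *
          pr p₁ (fun ω => σρ ω = a ∧ (fun w : {x // x ∈ W} => σ w.1 ω)
            = fun w => c w * PyF G.edgeFinset pathE y w.1) := by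
    intro a ha c hc y hy
    have hapm : a = 1 ∨ a = -1 := by simpa using ha
    have hcpm := mem_pmCube.1 hc
    have hypm := mem_pmCube.1 hy
    have hy' : ∀ e, extF G.edgeFinset y e = 1 ∨ extF G.edgeFinset y e = -1 := extF_pm hypm
    -- Step A : decompose the spin-synchronization probability over configurations
    have stepA : pr p₂ (fun ω => X ρ ω = a ∧ ((fun w : {x // x ∈ W} => X w.1 ω),
          (fun e : {e // e ∈ G.edgeFinset} => Y e.1 ω)) = (c, y))
        = ∑ x ∈ pmCube V, (if (x ρ = a ∧ ∀ w : {v // v ∈ W}, x w.1 = c w) then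
            (1/2:ℝ)^(Fintype.card V) * ∏ e ∈ G.edgeFinset,
              (if edgeSpin x e * extF G.edgeFinset y e = -1 then ε e else 1 - ε e)
          else 0) := by
      have hiff : ∀ ω : Ω₂, (X ρ ω = a ∧ ((fun w : {x // x ∈ W} => X w.1 ω),
            (fun e : {e // e ∈ G.edgeFinset} => Y e.1 ω)) = (c, y))
          ↔ ((fun k : (V → ℝ) × ({e // e ∈ G.edgeFinset} → ℝ) =>
              k.1 ρ = a ∧ (∀ w : {v // v ∈ W}, k.1 w.1 = c w) ∧
              (∀ e : {e // e ∈ G.edgeFinset}, edgeSpin k.1 e.1 * k.2 e = y e))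
            ((fun v => X v ω), (fun e : {e // e ∈ G.edgeFinset} => Z e.1 ω))) := by
        intro ω
        simp only
        constructor
        · rintro ⟨h1, h2⟩
          rw [Prod.mk.injEq] at h2
          refine ⟨h1, fun w => congrFun h2.1 w, fun e => ?_⟩
          rw [← hYdef e.1 e.2 ω]
          exact congrFun h2.2 e
        · rintro ⟨h1, h2, h3⟩
          refine ⟨h1, ?_⟩
          rw [Prod.mk.injEq]
          refine ⟨funext h2, funext fun e => ?_⟩
          rw [hYdef e.1 e.2 ω]
          exact h3 e
      rw [pr_partition p₂
          (fun ω => ((fun v => X v ω), (fun e : {e // e ∈ G.edgeFinset} => Z e.1 ω)))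
          ((pmCube V) ×ˢ (pmCube {e // e ∈ G.edgeFinset}))
          (fun ω => Finset.mem_product.2 ⟨mem_pmCube.2 fun v => hXr v ω,
            mem_pmCube.2 fun e => hZr e.1 e.2 ω⟩) _
          (fun k : (V → ℝ) × ({e // e ∈ G.edgeFinset} → ℝ) =>
              k.1 ρ = a ∧ (∀ w : {v // v ∈ W}, k.1 w.1 = c w) ∧
              (∀ e : {e // e ∈ G.edgeFinset}, edgeSpin k.1 e.1 * k.2 e = y e)) hiff,
        Finset.sum_product]
      refine Finset.sum_congr rfl fun x hx => ?_
      have hxpm := mem_pmCube.1 hx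
      have hespm : ∀ e, edgeSpin x e = 1 ∨ edgeSpin x e = -1 := edgeSpin_pm hxpm
      have hprK : ∀ z ∈ pmCube {e // e ∈ G.edgeFinset},
          pr p₂ (fun ω => ((fun v => X v ω),
              (fun e : {e // e ∈ G.edgeFinset} => Z e.1 ω)) = (x, z))
            = (1/2:ℝ)^(Fintype.card V) * ∏ e ∈ G.edgeFinset,
                (if extF G.edgeFinset z e = -1 then ε e else 1 - ε e) := by
        intro z hz
        have hzpm := mem_pmCube.1 hz
        have hiff2 : ∀ ω : Ω₂, (((fun v => X v ω),
              (fun e : {e // e ∈ G.edgeFinset} => Z e.1 ω)) = (x, z))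
            ↔ ((∀ v, X v ω = x v) ∧ ∀ e ∈ G.edgeFinset, Z e ω = extF G.edgeFinset z e) := by
          intro ω
          constructor
          · intro h
            rw [Prod.mk.injEq] at h
            exact ⟨fun v => congrFun h.1 v, fun e he => by
              rw [extF_mem z he]; exact congrFun h.2 ⟨e, he⟩⟩
          · rintro ⟨h1, h2⟩
            rw [Prod.mk.injEq]
            refine ⟨funext h1, funext fun e => ?_⟩
            have h3 := h2 e.1 e.2
            rwa [extF_mem z e.2, Subtype.coe_eta] at h3
        rw [pr_congr p₂ hiff2]
        exact hjoint₂ x hxpm _ (fun e _ => extF_pm hzpm e)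
      by_cases hP : x ρ = a ∧ ∀ w : {v // v ∈ W}, x w.1 = c w
      · rw [if_pos hP]
        have hzxmem : (fun e : {e // e ∈ G.edgeFinset} => edgeSpin x e.1 * y e)
            ∈ pmCube {e // e ∈ G.edgeFinset} :=
          mem_pmCube.2 fun e => pm_mul (hespm e.1) (hypm e)
        trans (∑ z ∈ pmCube {e // e ∈ G.edgeFinset},
            (if z = (fun e : {e // e ∈ G.edgeFinset} => edgeSpin x e.1 * y e) then
              (1/2:ℝ)^(Fintype.card V) * ∏ e ∈ G.edgeFinset,
                (if extF G.edgeFinset z e = -1 then ε e else 1 - ε e) else 0))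
        · refine Finset.sum_congr rfl fun z hz => ?_
          refine ite_congr' ?_ (hprK z hz) rfl
          constructor
          · rintro ⟨-, -, h3⟩
            funext e
            have h3' : edgeSpin x e.1 * z e = y e := h3 e
            show z e = edgeSpin x e.1 * y e
            rw [← h3', ← mul_assoc, pm_sq (hespm e.1), one_mul]
          · rintro rfl
            refine ⟨hP.1, hP.2, fun e => ?_⟩
            show edgeSpin x e.1 * (edgeSpin x e.1 * y e) = y e
            rw [← mul_assoc, pm_sq (hespm e.1), one_mul]
        · rw [Finset.sum_ite_eq' _ _ (fun z => (1/2:ℝ)^(Fintype.card V) *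
            ∏ e ∈ G.edgeFinset, (if extF G.edgeFinset z e = -1 then ε e else 1 - ε e)),
            if_pos hzxmem]
          congr 1
          refine Finset.prod_congr rfl fun e he => ?_
          have he1 : extF G.edgeFinset
              (fun e' : {e // e ∈ G.edgeFinset} => edgeSpin x e'.1 * y e') e
              = edgeSpin x e * extF G.edgeFinset y e := by
            rw [extF_mem _ he]
            show edgeSpin x e * y ⟨e, he⟩ = edgeSpin x e * extF G.edgeFinset y e
            rw [extF_mem y he]
          rw [he1]
      · rw [if_neg hP]
        refine Finset.sum_eq_zero fun z hz => ?_
        refine if_neg fun hcond => hP ⟨hcond.1, hcond.2.1⟩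
    -- Step B : decompose the broadcasting probability over configurations
    have stepB : pr p₁ (fun ω => σρ ω = a ∧ (fun w : {x // x ∈ W} => σ w.1 ω)
          = fun w => c w * PyF G.edgeFinset pathE y w.1)
        = ∑ z ∈ pmCube {e // e ∈ G.edgeFinset},
            (if (∀ w : {v // v ∈ W}, a * ∏ e ∈ pathE w.1, extF G.edgeFinset z e
                = c w * PyF G.edgeFinset pathE y w.1) then
              (1/2:ℝ) * ∏ e ∈ G.edgeFinset,
                (if extF G.edgeFinset z e = -1 then ε e else 1 - ε e)
            else 0) := by
      have hiff : ∀ ω : Ω₁, (σρ ω = a ∧ (fun w : {x // x ∈ W} => σ w.1 ω)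
            = fun w => c w * PyF G.edgeFinset pathE y w.1)
          ↔ ((fun k : ℝ × ({e // e ∈ G.edgeFinset} → ℝ) =>
              k.1 = a ∧ (∀ w : {v // v ∈ W}, k.1 * ∏ e ∈ pathE w.1, extF G.edgeFinset k.2 e
                = c w * PyF G.edgeFinset pathE y w.1))
            ((σρ ω), (fun e : {e // e ∈ G.edgeFinset} => η e.1 ω))) := by
        intro ω
        simp only
        have hw : ∀ w : {v // v ∈ W}, σ w.1 ω = σρ ω * ∏ e ∈ pathE w.1,
            extF G.edgeFinset (fun e : {e // e ∈ G.edgeFinset} => η e.1 ω) e := by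
          intro w
          rw [hσdef]
          congr 1
          exact Finset.prod_congr rfl fun e he =>
            (extF_mem (fun e : {e // e ∈ G.edgeFinset} => η e.1 ω)
              (pathE_subset hpath w.1 he)).symm
        constructor
        · rintro ⟨h1, h2⟩
          refine ⟨h1, fun w => ?_⟩
          rw [← hw w]
          exact congrFun h2 w
        · rintro ⟨h1, h2⟩
          refine ⟨h1, funext fun w => ?_⟩
          rw [hw w]
          exact h2 w
      rw [pr_partition p₁
          (fun ω => ((σρ ω), (fun e : {e // e ∈ G.edgeFinset} => η e.1 ω)))
          (({1,-1} : Finset ℝ) ×ˢ (pmCube {e // e ∈ G.edgeFinset}))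
          (fun ω => Finset.mem_product.2 ⟨hApm1 ω, mem_pmCube.2 fun e => hηr e.1 e.2 ω⟩)
          _ (fun k : ℝ × ({e // e ∈ G.edgeFinset} → ℝ) =>
              k.1 = a ∧ (∀ w : {v // v ∈ W}, k.1 * ∏ e ∈ pathE w.1, extF G.edgeFinset k.2 e
                = c w * PyF G.edgeFinset pathE y w.1)) hiff,
        Finset.sum_product_right]
      refine Finset.sum_congr rfl fun z hz => ?_
      have hzpm := mem_pmCube.1 hz
      have hprK1 : ∀ s ∈ ({1,-1} : Finset ℝ),
          pr p₁ (fun ω => ((σρ ω), (fun e : {e // e ∈ G.edgeFinset} => η e.1 ω)) = (s, z))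
            = (1/2:ℝ) * ∏ e ∈ G.edgeFinset,
                (if extF G.edgeFinset z e = -1 then ε e else 1 - ε e) := by
        intro s hs
        have hiff2 : ∀ ω : Ω₁, (((σρ ω),
              (fun e : {e // e ∈ G.edgeFinset} => η e.1 ω)) = (s, z))
            ↔ (σρ ω = s ∧ ∀ e ∈ G.edgeFinset, η e ω = extF G.edgeFinset z e) := by
          intro ω
          constructor
          · intro h
            rw [Prod.mk.injEq] at h
            exact ⟨h.1, fun e he => by
              rw [extF_mem z he]; exact congrFun h.2 ⟨e, he⟩⟩
          · rintro ⟨h1, h2⟩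
            rw [Prod.mk.injEq]
            refine ⟨h1, funext fun e => ?_⟩
            have h3 := h2 e.1 e.2
            rwa [extF_mem z e.2, Subtype.coe_eta] at h3
        rw [pr_congr p₁ hiff2]
        exact hjoint₁ s (by simpa using hs) _ (fun e _ => extF_pm hzpm e)
      by_cases hPz : ∀ w : {v // v ∈ W}, a * ∏ e ∈ pathE w.1, extF G.edgeFinset z e
          = c w * PyF G.edgeFinset pathE y w.1
      · rw [if_pos hPz]
        trans (∑ s ∈ ({1,-1} : Finset ℝ), (if s = a then (1/2:ℝ) * ∏ e ∈ G.edgeFinset,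
            (if extF G.edgeFinset z e = -1 then ε e else 1 - ε e) else 0))
        · refine Finset.sum_congr rfl fun s hs => ?_
          refine ite_congr' ?_ (hprK1 s hs) rfl
          constructor
          · exact fun h => h.1
          · intro h
            subst h
            exact ⟨rfl, hPz⟩
        · rw [Finset.sum_ite_eq' _ _ (fun _ => (1/2:ℝ) * ∏ e ∈ G.edgeFinset,
            (if extF G.edgeFinset z e = -1 then ε e else 1 - ε e)), if_pos ha]
      · rw [if_neg hPz]
        refine Finset.sum_eq_zero fun s hs => ?_
        refine if_neg fun hcond => hPz ?_
        intro w
        have := hcond.2 w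
        rwa [hcond.1] at this
    -- Step C : the gradient bijection between vertex and edge configurations
    have hpow : (1/2:ℝ)^(Fintype.card V) = (1/2:ℝ)^(G.edgeFinset.card) * (1/2) := by
      rw [← hT.card_edgeFinset, pow_succ]
    have stepC : ∑ x ∈ pmCube V, (if (x ρ = a ∧ ∀ w : {v // v ∈ W}, x w.1 = c w) then
            (1/2:ℝ)^(Fintype.card V) * ∏ e ∈ G.edgeFinset,
              (if edgeSpin x e * extF G.edgeFinset y e = -1 then ε e else 1 - ε e)
          else 0)
        = (1/2:ℝ)^(G.edgeFinset.card) *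
          ∑ z ∈ pmCube {e // e ∈ G.edgeFinset},
            (if (∀ w : {v // v ∈ W}, a * ∏ e ∈ pathE w.1, extF G.edgeFinset z e
                = c w * PyF G.edgeFinset pathE y w.1) then
              (1/2:ℝ) * ∏ e ∈ G.edgeFinset,
                (if extF G.edgeFinset z e = -1 then ε e else 1 - ε e)
            else 0) := by
      rw [Finset.mul_sum]
      simp only [mul_ite, mul_zero]
      rw [← Finset.sum_filter, ← Finset.sum_filter]
      refine Finset.sum_nbij'
        (i := fun x => (fun e : {e // e ∈ G.edgeFinset} =>
          extF G.edgeFinset y e.1 * edgeSpin x e.1))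
        (j := fun z => (fun v => a * ∏ e ∈ pathE v,
          (extF G.edgeFinset y e * extF G.edgeFinset z e)))
        ?_ ?_ ?_ ?_ ?_
      · -- i maps into the target filter
        intro x hx
        obtain ⟨hxc, hx1, hx2⟩ : x ∈ pmCube V ∧ x ρ = a ∧ ∀ w : {v // v ∈ W}, x w.1 = c w :=
          ⟨(Finset.mem_filter.1 hx).1, (Finset.mem_filter.1 hx).2.1,
            (Finset.mem_filter.1 hx).2.2⟩
        have hxpm := mem_pmCube.1 hxc
        have hespm : ∀ e, edgeSpin x e = 1 ∨ edgeSpin x e = -1 := edgeSpin_pm hxpm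
        refine Finset.mem_filter.2 ⟨mem_pmCube.2 fun e => pm_mul (hy' e.1) (hespm e.1), ?_⟩
        intro w
        have h1 : ∀ e ∈ pathE w.1, extF G.edgeFinset
            (fun e' : {e // e ∈ G.edgeFinset} =>
              extF G.edgeFinset y e'.1 * edgeSpin x e'.1) e
            = extF G.edgeFinset y e * edgeSpin x e :=
          fun e he => extF_mem _ (pathE_subset hpath w.1 he)
        rw [Finset.prod_congr rfl h1, Finset.prod_mul_distrib,
          pathE_telescope hpath hxpm w.1, hx1, hx2 w]
        show a * ((∏ e ∈ pathE w.1, extF G.edgeFinset y e) * (a * c w))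
          = c w * PyF G.edgeFinset pathE y w.1
        have h2 : a * ((∏ e ∈ pathE w.1, extF G.edgeFinset y e) * (a * c w))
            = (a * a) * (c w * ∏ e ∈ pathE w.1, extF G.edgeFinset y e) := by ring
        rw [h2, pm_sq hapm, one_mul]
        rfl
      · -- j maps into the source filter
        intro z hz
        obtain ⟨hzc, hPz⟩ := Finset.mem_filter.1 hz
        have hz' := extF_pm (mem_pmCube.1 hzc)
        have hPy : ∀ v, (∏ e ∈ pathE v, extF G.edgeFinset y e) = 1 ∨
            (∏ e ∈ pathE v, extF G.edgeFinset y e) = -1 := fun v => pm_prod' hy'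
        refine Finset.mem_filter.2 ⟨mem_pmCube.2 fun v =>
          pm_mul hapm (pm_prod' fun e => pm_mul (hy' e) (hz' e)), ?_, ?_⟩
        · show a * ∏ e ∈ pathE ρ, (extF G.edgeFinset y e * extF G.edgeFinset z e) = a
          rw [pathE_root hT hpath, Finset.prod_empty, mul_one]
        · intro w
          show a * ∏ e ∈ pathE w.1, (extF G.edgeFinset y e * extF G.edgeFinset z e) = c w
          have h2 := hPz w
          have h3 : PyF G.edgeFinset pathE y w.1
              = ∏ e ∈ pathE w.1, extF G.edgeFinset y e := rfl
          rw [h3] at h2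
          rw [Finset.prod_mul_distrib]
          have h4 : a * ((∏ e ∈ pathE w.1, extF G.edgeFinset y e)
                * ∏ e ∈ pathE w.1, extF G.edgeFinset z e)
              = (∏ e ∈ pathE w.1, extF G.edgeFinset y e)
                * (a * ∏ e ∈ pathE w.1, extF G.edgeFinset z e) := by ring
          rw [h4, h2]
          have h5 : (∏ e ∈ pathE w.1, extF G.edgeFinset y e)
              * (c w * ∏ e ∈ pathE w.1, extF G.edgeFinset y e)
              = ((∏ e ∈ pathE w.1, extF G.edgeFinset y e)
                * ∏ e ∈ pathE w.1, extF G.edgeFinset y e) * c w := by ring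
          rw [h5, pm_sq (hPy w.1), one_mul]
      · -- left inverse
        intro x hx
        obtain ⟨hxc, hx1, -⟩ : x ∈ pmCube V ∧ x ρ = a ∧ ∀ w : {v // v ∈ W}, x w.1 = c w :=
          ⟨(Finset.mem_filter.1 hx).1, (Finset.mem_filter.1 hx).2.1,
            (Finset.mem_filter.1 hx).2.2⟩
        have hxpm := mem_pmCube.1 hxc
        funext v
        show a * ∏ e ∈ pathE v, (extF G.edgeFinset y e * extF G.edgeFinset
          (fun e' : {e // e ∈ G.edgeFinset} =>
            extF G.edgeFinset y e'.1 * edgeSpin x e'.1) e) = x v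
        have h1 : ∀ e ∈ pathE v, extF G.edgeFinset y e * extF G.edgeFinset
            (fun e' : {e // e ∈ G.edgeFinset} =>
              extF G.edgeFinset y e'.1 * edgeSpin x e'.1) e = edgeSpin x e := by
          intro e he
          have h2 : extF G.edgeFinset (fun e' : {e // e ∈ G.edgeFinset} =>
              extF G.edgeFinset y e'.1 * edgeSpin x e'.1) e
              = extF G.edgeFinset y e * edgeSpin x e :=
            extF_mem _ (pathE_subset hpath v he)
          rw [h2, ← mul_assoc, pm_sq (hy' e), one_mul]
        rw [Finset.prod_congr rfl h1, pathE_telescope hpath hxpm v, hx1,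
          ← mul_assoc, pm_sq hapm, one_mul]
      · -- right inverse
        intro z hz
        obtain ⟨hzc, -⟩ := Finset.mem_filter.1 hz
        have hz' := extF_pm (mem_pmCube.1 hzc)
        funext e
        show extF G.edgeFinset y e.1 * edgeSpin (fun v => a * ∏ e' ∈ pathE v,
          (extF G.edgeFinset y e' * extF G.edgeFinset z e')) e.1 = z e
        rw [grad_edgeSpin hT hpath hapm (fun e' => pm_mul (hy' e') (hz' e')) e.2]
        show extF G.edgeFinset y e.1 *
          (extF G.edgeFinset y e.1 * extF G.edgeFinset z e.1) = z e
        rw [← mul_assoc, pm_sq (hy' e.1), one_mul, extF_mem z e.2, Subtype.coe_eta]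
      · -- the summands agree
        intro x hx
        obtain ⟨hxc, -, -⟩ : x ∈ pmCube V ∧ x ρ = a ∧ ∀ w : {v // v ∈ W}, x w.1 = c w :=
          ⟨(Finset.mem_filter.1 hx).1, (Finset.mem_filter.1 hx).2.1,
            (Finset.mem_filter.1 hx).2.2⟩
        rw [hpow]
        have h1 : ∀ e ∈ G.edgeFinset,
            (if edgeSpin x e * extF G.edgeFinset y e = -1 then ε e else 1 - ε e)
            = (if extF G.edgeFinset
                (fun e' : {e // e ∈ G.edgeFinset} =>
                  extF G.edgeFinset y e'.1 * edgeSpin x e'.1) e = -1 then ε e else 1 - ε e) := by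
          intro e he
          have h2 : extF G.edgeFinset
              (fun e' : {e // e ∈ G.edgeFinset} =>
                extF G.edgeFinset y e'.1 * edgeSpin x e'.1) e
              = edgeSpin x e * extF G.edgeFinset y e := by
            rw [extF_mem _ he]
            exact mul_comm _ _
          rw [h2]
        rw [Finset.prod_congr rfl h1]
        ring
    rw [stepA, stepB]
    exact stepC

  -- reindexing the cube over W by pointwise multiplication with ±1 signs
  have Hre : ∀ y ∈ pmCube {e // e ∈ G.edgeFinset}, ∀ F : ({x // x ∈ W} → ℝ) → ℝ,
      ∑ c ∈ pmCube {x // x ∈ W}, F (fun w => c w * PyF G.edgeFinset pathE y w.1)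
        = ∑ c ∈ pmCube {x // x ∈ W}, F c := by
    intro y hy F
    have hy' := extF_pm (mem_pmCube.1 hy)
    have hPy : ∀ v, PyF G.edgeFinset pathE y v = 1 ∨ PyF G.edgeFinset pathE y v = -1 :=
      fun v => pm_prod' (fun e => hy' e)
    refine Finset.sum_nbij' (fun c => fun w => c w * PyF G.edgeFinset pathE y w.1)
      (fun c => fun w => c w * PyF G.edgeFinset pathE y w.1) ?_ ?_ ?_ ?_ ?_
    · intro c hc
      exact mem_pmCube.2 fun w => pm_mul (mem_pmCube.1 hc w) (hPy w.1)
    · intro c hc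
      exact mem_pmCube.2 fun w => pm_mul (mem_pmCube.1 hc w) (hPy w.1)
    · intro c _
      funext w
      simp only
      rw [mul_assoc, pm_sq (hPy w.1), mul_one]
    · intro c _
      funext w
      simp only
      rw [mul_assoc, pm_sq (hPy w.1), mul_one]
    · intro c _
      rfl
  -- marginals
  have HQ1 : ∀ c' : {x // x ∈ W} → ℝ,
      pr p₁ (fun ω => (fun w : {x // x ∈ W} => σ w.1 ω) = c')
        = ∑ a ∈ ({1,-1} : Finset ℝ),
            pr p₁ (fun ω => σρ ω = a ∧ (fun w : {x // x ∈ W} => σ w.1 ω) = c') :=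
    fun c' => pr_split p₁ σρ _ hApm1 _
  have HQ2K : ∀ c ∈ pmCube {x // x ∈ W}, ∀ y ∈ pmCube {e // e ∈ G.edgeFinset},
      pr p₂ (fun ω => ((fun w : {x // x ∈ W} => X w.1 ω),
          (fun e : {e // e ∈ G.edgeFinset} => Y e.1 ω)) = (c, y))
        = (1/2)^(G.edgeFinset.card) *
          pr p₁ (fun ω => (fun w : {x // x ∈ W} => σ w.1 ω)
            = fun w => c w * PyF G.edgeFinset pathE y w.1) := by
    intro c hc y hy
    rw [pr_split p₂ (X ρ) _ hApm2, HQ1]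
    rw [Finset.mul_sum]
    exact Finset.sum_congr rfl fun a ha => Hmain a ha c hc y hy
  have HM1 : ∀ a : ℝ, pr p₁ (fun ω => σρ ω = a)
      = ∑ c ∈ pmCube {x // x ∈ W},
          pr p₁ (fun ω => σρ ω = a ∧ (fun w : {x // x ∈ W} => σ w.1 ω) = c) := by
    intro a
    rw [pr_split p₁ (fun ω => fun w : {x // x ∈ W} => σ w.1 ω) _ hB1mem]
    exact Finset.sum_congr rfl fun c _ => pr_congr p₁ (fun ω => and_comm)
  have HM : ∀ a ∈ ({1,-1} : Finset ℝ),
      pr p₂ (fun ω => X ρ ω = a) = pr p₁ (fun ω => σρ ω = a) := by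
    intro a ha
    rw [pr_split p₂ (fun ω => ((fun w : {x // x ∈ W} => X w.1 ω),
        (fun e : {e // e ∈ G.edgeFinset} => Y e.1 ω))) _ hB2mem, Finset.sum_product]
    have step1 : ∀ c ∈ pmCube {x // x ∈ W}, ∀ y ∈ pmCube {e // e ∈ G.edgeFinset},
        pr p₂ (fun ω => ((fun w : {x // x ∈ W} => X w.1 ω),
            (fun e : {e // e ∈ G.edgeFinset} => Y e.1 ω)) = (c, y) ∧ X ρ ω = a)
          = (1/2)^(G.edgeFinset.card) *
            pr p₁ (fun ω => σρ ω = a ∧ (fun w : {x // x ∈ W} => σ w.1 ω)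
              = fun w => c w * PyF G.edgeFinset pathE y w.1) := by
      intro c hc y hy
      rw [pr_congr p₂ (fun ω => and_comm)]
      exact Hmain a ha c hc y hy
    calc ∑ c ∈ pmCube {x // x ∈ W}, ∑ y ∈ pmCube {e // e ∈ G.edgeFinset},
          pr p₂ (fun ω => ((fun w : {x // x ∈ W} => X w.1 ω),
            (fun e : {e // e ∈ G.edgeFinset} => Y e.1 ω)) = (c, y) ∧ X ρ ω = a)
        = ∑ c ∈ pmCube {x // x ∈ W}, ∑ y ∈ pmCube {e // e ∈ G.edgeFinset},
            (1/2)^(G.edgeFinset.card) *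
              pr p₁ (fun ω => σρ ω = a ∧ (fun w : {x // x ∈ W} => σ w.1 ω)
                = fun w => c w * PyF G.edgeFinset pathE y w.1) :=
          Finset.sum_congr rfl fun c hc => Finset.sum_congr rfl fun y hy => step1 c hc y hy
      _ = ∑ y ∈ pmCube {e // e ∈ G.edgeFinset}, ∑ c ∈ pmCube {x // x ∈ W},
            (1/2)^(G.edgeFinset.card) *
              pr p₁ (fun ω => σρ ω = a ∧ (fun w : {x // x ∈ W} => σ w.1 ω)
                = fun w => c w * PyF G.edgeFinset pathE y w.1) := Finset.sum_comm
      _ = ∑ y ∈ pmCube {e // e ∈ G.edgeFinset},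
            (1/2)^(G.edgeFinset.card) * pr p₁ (fun ω => σρ ω = a) := by
          refine Finset.sum_congr rfl fun y hy => ?_
          rw [← Finset.mul_sum]
          congr 1
          rw [Hre y hy (fun c' => pr p₁ (fun ω => σρ ω = a ∧
            (fun w : {x // x ∈ W} => σ w.1 ω) = c')), ← HM1]
      _ = pr p₁ (fun ω => σρ ω = a) := by
          rw [Finset.sum_const, nsmul_eq_mul, ← mul_assoc, hNK, one_mul]
  -- per-term identity for the I2 sums
  have Hterm : ∀ a ∈ ({1,-1} : Finset ℝ), ∀ c ∈ pmCube {x // x ∈ W},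
      ∀ y ∈ pmCube {e // e ∈ G.edgeFinset},
      (if 0 < pr p₂ (fun ω => X ρ ω = a) * pr p₂ (fun ω => ((fun w : {x // x ∈ W} => X w.1 ω),
            (fun e : {e // e ∈ G.edgeFinset} => Y e.1 ω)) = (c, y)) then
          (pr p₂ (fun ω => X ρ ω = a ∧ ((fun w : {x // x ∈ W} => X w.1 ω),
              (fun e : {e // e ∈ G.edgeFinset} => Y e.1 ω)) = (c, y))
            - pr p₂ (fun ω => X ρ ω = a) * pr p₂ (fun ω => ((fun w : {x // x ∈ W} => X w.1 ω),
              (fun e : {e // e ∈ G.edgeFinset} => Y e.1 ω)) = (c, y)))^2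
          / (pr p₂ (fun ω => X ρ ω = a) * pr p₂ (fun ω => ((fun w : {x // x ∈ W} => X w.1 ω),
              (fun e : {e // e ∈ G.edgeFinset} => Y e.1 ω)) = (c, y)))
        else 0)
      = (1/2)^(G.edgeFinset.card) *
        (if 0 < pr p₁ (fun ω => σρ ω = a) * pr p₁ (fun ω => (fun w : {x // x ∈ W} => σ w.1 ω)
              = fun w => c w * PyF G.edgeFinset pathE y w.1) then
            (pr p₁ (fun ω => σρ ω = a ∧ (fun w : {x // x ∈ W} => σ w.1 ω)
                = fun w => c w * PyF G.edgeFinset pathE y w.1)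
              - pr p₁ (fun ω => σρ ω = a) * pr p₁ (fun ω => (fun w : {x // x ∈ W} => σ w.1 ω)
                = fun w => c w * PyF G.edgeFinset pathE y w.1))^2
            / (pr p₁ (fun ω => σρ ω = a) * pr p₁ (fun ω => (fun w : {x // x ∈ W} => σ w.1 ω)
                = fun w => c w * PyF G.edgeFinset pathE y w.1))
          else 0) := by
    intro a ha c hc y hy
    rw [HM a ha, HQ2K c hc y hy, Hmain a ha c hc y hy]
    exact scale_guard _ _ _ _ hKpos
  constructor
  · -- the I2 statement
    rw [I2_eq_sum p₁ σρ _ ({1,-1} : Finset ℝ) (pmCube {x // x ∈ W}) hApm1 hB1mem,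
      I2_eq_sum p₂ (X ρ) _ ({1,-1} : Finset ℝ)
        ((pmCube {x // x ∈ W}) ×ˢ (pmCube {e // e ∈ G.edgeFinset})) hApm2 hB2mem]
    refine Finset.sum_congr rfl fun a ha => ?_
    rw [Finset.sum_product]
    symm
    calc ∑ c ∈ pmCube {x // x ∈ W}, ∑ y ∈ pmCube {e // e ∈ G.edgeFinset},
          (if 0 < pr p₂ (fun ω => X ρ ω = a) * pr p₂ (fun ω => ((fun w : {x // x ∈ W} => X w.1 ω),
              (fun e : {e // e ∈ G.edgeFinset} => Y e.1 ω)) = (c, y)) then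
            (pr p₂ (fun ω => X ρ ω = a ∧ ((fun w : {x // x ∈ W} => X w.1 ω),
                (fun e : {e // e ∈ G.edgeFinset} => Y e.1 ω)) = (c, y))
              - pr p₂ (fun ω => X ρ ω = a) * pr p₂ (fun ω => ((fun w : {x // x ∈ W} => X w.1 ω),
                (fun e : {e // e ∈ G.edgeFinset} => Y e.1 ω)) = (c, y)))^2
            / (pr p₂ (fun ω => X ρ ω = a) * pr p₂ (fun ω => ((fun w : {x // x ∈ W} => X w.1 ω),
                (fun e : {e // e ∈ G.edgeFinset} => Y e.1 ω)) = (c, y)))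
          else 0)
        = ∑ y ∈ pmCube {e // e ∈ G.edgeFinset}, ∑ c ∈ pmCube {x // x ∈ W},
            (1/2)^(G.edgeFinset.card) *
            (if 0 < pr p₁ (fun ω => σρ ω = a) * pr p₁ (fun ω => (fun w : {x // x ∈ W} => σ w.1 ω)
                  = fun w => c w * PyF G.edgeFinset pathE y w.1) then
                (pr p₁ (fun ω => σρ ω = a ∧ (fun w : {x // x ∈ W} => σ w.1 ω)
                    = fun w => c w * PyF G.edgeFinset pathE y w.1)
                  - pr p₁ (fun ω => σρ ω = a) * pr p₁ (fun ω => (fun w : {x // x ∈ W} => σ w.1 ω)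
                    = fun w => c w * PyF G.edgeFinset pathE y w.1))^2
                / (pr p₁ (fun ω => σρ ω = a) * pr p₁ (fun ω => (fun w : {x // x ∈ W} => σ w.1 ω)
                    = fun w => c w * PyF G.edgeFinset pathE y w.1))
              else 0) := by
          rw [Finset.sum_comm]
          exact Finset.sum_congr rfl fun y hy => Finset.sum_congr rfl fun c hc =>
            Hterm a ha c hc y hy
      _ = ∑ y ∈ pmCube {e // e ∈ G.edgeFinset}, (1/2)^(G.edgeFinset.card) *
            ∑ c ∈ pmCube {x // x ∈ W},
            (if 0 < pr p₁ (fun ω => σρ ω = a) * pr p₁ (fun ω => (fun w : {x // x ∈ W} => σ w.1 ω)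
                  = c) then
                (pr p₁ (fun ω => σρ ω = a ∧ (fun w : {x // x ∈ W} => σ w.1 ω) = c)
                  - pr p₁ (fun ω => σρ ω = a) * pr p₁ (fun ω => (fun w : {x // x ∈ W} => σ w.1 ω)
                    = c))^2
                / (pr p₁ (fun ω => σρ ω = a) * pr p₁ (fun ω => (fun w : {x // x ∈ W} => σ w.1 ω)
                    = c))
              else 0) := by
          refine Finset.sum_congr rfl fun y hy => ?_
          rw [← Finset.mul_sum]
          congr 1
          exact Hre y hy (fun c' =>
            (if 0 < pr p₁ (fun ω => σρ ω = a) * pr p₁ (fun ω => (fun w : {x // x ∈ W} => σ w.1 ω)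
                  = c') then
                (pr p₁ (fun ω => σρ ω = a ∧ (fun w : {x // x ∈ W} => σ w.1 ω) = c')
                  - pr p₁ (fun ω => σρ ω = a) * pr p₁ (fun ω => (fun w : {x // x ∈ W} => σ w.1 ω)
                    = c'))^2
                / (pr p₁ (fun ω => σρ ω = a) * pr p₁ (fun ω => (fun w : {x // x ∈ W} => σ w.1 ω)
                    = c'))
              else 0))
      _ = ∑ c ∈ pmCube {x // x ∈ W},
            (if 0 < pr p₁ (fun ω => σρ ω = a) * pr p₁ (fun ω => (fun w : {x // x ∈ W} => σ w.1 ω)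
                  = c) then
                (pr p₁ (fun ω => σρ ω = a ∧ (fun w : {x // x ∈ W} => σ w.1 ω) = c)
                  - pr p₁ (fun ω => σρ ω = a) * pr p₁ (fun ω => (fun w : {x // x ∈ W} => σ w.1 ω)
                    = c))^2
                / (pr p₁ (fun ω => σρ ω = a) * pr p₁ (fun ω => (fun w : {x // x ∈ W} => σ w.1 ω)
                    = c))
              else 0) := by
          rw [Finset.sum_const, nsmul_eq_mul, ← mul_assoc, hNK, one_mul]
  · -- the conditional-expectation statement
    rw [expec_condExp_sq_pm p₁ _ σρ hσr (pmCube {x // x ∈ W}) hB1mem,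
      expec_condExp_sq_pm p₂ _ (X ρ) (hXr ρ)
        ((pmCube {x // x ∈ W}) ×ˢ (pmCube {e // e ∈ G.edgeFinset})) hB2mem]
    have HtermF : ∀ c ∈ pmCube {x // x ∈ W}, ∀ y ∈ pmCube {e // e ∈ G.edgeFinset},
        (pr p₂ (fun ω => X ρ ω = 1 ∧ ((fun w : {x // x ∈ W} => X w.1 ω),
              (fun e : {e // e ∈ G.edgeFinset} => Y e.1 ω)) = (c, y))
          - pr p₂ (fun ω => X ρ ω = -1 ∧ ((fun w : {x // x ∈ W} => X w.1 ω),
              (fun e : {e // e ∈ G.edgeFinset} => Y e.1 ω)) = (c, y)))^2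
          / pr p₂ (fun ω => ((fun w : {x // x ∈ W} => X w.1 ω),
              (fun e : {e // e ∈ G.edgeFinset} => Y e.1 ω)) = (c, y))
        = (1/2)^(G.edgeFinset.card) *
          ((pr p₁ (fun ω => σρ ω = 1 ∧ (fun w : {x // x ∈ W} => σ w.1 ω)
                = fun w => c w * PyF G.edgeFinset pathE y w.1)
            - pr p₁ (fun ω => σρ ω = -1 ∧ (fun w : {x // x ∈ W} => σ w.1 ω)
                = fun w => c w * PyF G.edgeFinset pathE y w.1))^2
            / pr p₁ (fun ω => (fun w : {x // x ∈ W} => σ w.1 ω)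
                = fun w => c w * PyF G.edgeFinset pathE y w.1)) := by
      intro c hc y hy
      rw [Hmain 1 (by simp) c hc y hy, Hmain (-1) (by simp) c hc y hy, HQ2K c hc y hy]
      have hfac : (1/2:ℝ)^(G.edgeFinset.card) *
            pr p₁ (fun ω => σρ ω = 1 ∧ (fun w : {x // x ∈ W} => σ w.1 ω)
                = fun w => c w * PyF G.edgeFinset pathE y w.1)
          - (1/2:ℝ)^(G.edgeFinset.card) *
            pr p₁ (fun ω => σρ ω = -1 ∧ (fun w : {x // x ∈ W} => σ w.1 ω)
                = fun w => c w * PyF G.edgeFinset pathE y w.1)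
          = (1/2:ℝ)^(G.edgeFinset.card) *
            (pr p₁ (fun ω => σρ ω = 1 ∧ (fun w : {x // x ∈ W} => σ w.1 ω)
                = fun w => c w * PyF G.edgeFinset pathE y w.1)
            - pr p₁ (fun ω => σρ ω = -1 ∧ (fun w : {x // x ∈ W} => σ w.1 ω)
                = fun w => c w * PyF G.edgeFinset pathE y w.1)) := by ring
      rw [hfac]
      exact scale_div _ _ _ hKpos
    rw [Finset.sum_product]
    symm
    calc ∑ c ∈ pmCube {x // x ∈ W}, ∑ y ∈ pmCube {e // e ∈ G.edgeFinset},
          (pr p₂ (fun ω => X ρ ω = 1 ∧ ((fun w : {x // x ∈ W} => X w.1 ω),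
              (fun e : {e // e ∈ G.edgeFinset} => Y e.1 ω)) = (c, y))
            - pr p₂ (fun ω => X ρ ω = -1 ∧ ((fun w : {x // x ∈ W} => X w.1 ω),
              (fun e : {e // e ∈ G.edgeFinset} => Y e.1 ω)) = (c, y)))^2
            / pr p₂ (fun ω => ((fun w : {x // x ∈ W} => X w.1 ω),
              (fun e : {e // e ∈ G.edgeFinset} => Y e.1 ω)) = (c, y))
        = ∑ y ∈ pmCube {e // e ∈ G.edgeFinset}, ∑ c ∈ pmCube {x // x ∈ W},
            (1/2)^(G.edgeFinset.card) *
            ((pr p₁ (fun ω => σρ ω = 1 ∧ (fun w : {x // x ∈ W} => σ w.1 ω)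
                  = fun w => c w * PyF G.edgeFinset pathE y w.1)
              - pr p₁ (fun ω => σρ ω = -1 ∧ (fun w : {x // x ∈ W} => σ w.1 ω)
                  = fun w => c w * PyF G.edgeFinset pathE y w.1))^2
              / pr p₁ (fun ω => (fun w : {x // x ∈ W} => σ w.1 ω)
                  = fun w => c w * PyF G.edgeFinset pathE y w.1)) := by
          rw [Finset.sum_comm]
          exact Finset.sum_congr rfl fun y hy => Finset.sum_congr rfl fun c hc =>
            HtermF c hc y hy
      _ = ∑ y ∈ pmCube {e // e ∈ G.edgeFinset}, (1/2)^(G.edgeFinset.card) *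
            ∑ c ∈ pmCube {x // x ∈ W},
            ((pr p₁ (fun ω => σρ ω = 1 ∧ (fun w : {x // x ∈ W} => σ w.1 ω) = c)
              - pr p₁ (fun ω => σρ ω = -1 ∧ (fun w : {x // x ∈ W} => σ w.1 ω) = c))^2
              / pr p₁ (fun ω => (fun w : {x // x ∈ W} => σ w.1 ω) = c)) := by
          refine Finset.sum_congr rfl fun y hy => ?_
          rw [← Finset.mul_sum]
          congr 1
          exact Hre y hy (fun c' =>
            ((pr p₁ (fun ω => σρ ω = 1 ∧ (fun w : {x // x ∈ W} => σ w.1 ω) = c')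
              - pr p₁ (fun ω => σρ ω = -1 ∧ (fun w : {x // x ∈ W} => σ w.1 ω) = c'))^2
              / pr p₁ (fun ω => (fun w : {x // x ∈ W} => σ w.1 ω) = c')))
      _ = ∑ c ∈ pmCube {x // x ∈ W},
            ((pr p₁ (fun ω => σρ ω = 1 ∧ (fun w : {x // x ∈ W} => σ w.1 ω) = c)
              - pr p₁ (fun ω => σρ ω = -1 ∧ (fun w : {x // x ∈ W} => σ w.1 ω) = c))^2
              / pr p₁ (fun ω => (fun w : {x // x ∈ W} => σ w.1 ω) = c)) := by
          rw [Finset.sum_const, nsmul_eq_mul, ← mul_assoc, hNK, one_mul]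

end
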